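/- Let λ be a strict partition and let T be a shifted tableau of shape λ with entries in the positive integers such that every row of T is a hook word. Then T is a decomposition tableau if and only if there do not exist i ∈ [ℓ(λ)−1] and j,k ∈ [λ_{i+1}] for which one of the following holds: (a) T_{i,i} ≤ T_{i+1,i+k}, or j<k and T_{i,i+j} ≤ T_{i+1,i+k} ≤ T_{i+1,i+j}; (b) T_{i+1,i+k} < T_{i,i} < T_{i,i+k}, or j<k and T_{i+1,i+k} < T_{i,i+j} < T_{i,i+k}. -/

import Mathlib

open scoped Classical

/-! ## Shifted diagrams, hook words, decomposition tableaux -/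

/-- A strict partition, given as its (strictly decreasing) list of positive parts. -/
def IsStrictPartition (lam : List ℕ) : Prop :=
  lam.Chain' (· > ·) ∧ ∀ p ∈ lam, 0 < p

/-- A partition (weakly decreasing list of positive parts). -/
def IsPartition (lam : List ℕ) : Prop :=
  lam.Chain' (· ≥ ·) ∧ ∀ p ∈ lam, 0 < p

/-- `(i, j)` (1-indexed row `i`, column `j`) is a box of the shifted diagram `SD_lam`. -/
def InSD (lam : List ℕ) (i j : ℕ) : Prop :=
  1 ≤ i ∧ i ≤ lam.length ∧ i ≤ j ∧ j < i + lam.getD (i - 1) 0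

/-- `(i, j)` is a box of the (unshifted) Young diagram of `lam`. -/
def InYD (lam : List ℕ) (i j : ℕ) : Prop :=
  1 ≤ i ∧ i ≤ lam.length ∧ 1 ≤ j ∧ j ≤ lam.getD (i - 1) 0

/-- The word given by row `i` (1-indexed) of a shifted tableau `T`, read left to right. -/
def rowWord (lam : List ℕ) (T : ℕ × ℕ → ℕ) (i : ℕ) : List ℕ :=
  (List.range (lam.getD (i - 1) 0)).map fun j => T (i, i + j)

/-- A hook word: a sequence of positive integers `w₁ ≥ ⋯ ≥ w_m < w_{m+1} < ⋯ < w_n`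
for some `m ∈ [n]`. -/
def IsHookWord (w : List ℕ) : Prop :=
  (∀ v ∈ w, 0 < v) ∧
  ∃ m, 1 ≤ m ∧ m ≤ w.length ∧
    (∀ j : ℕ, j + 1 < m → w.getD (j + 1) 0 ≤ w.getD j 0) ∧
    (∀ j : ℕ, m ≤ j + 1 → j + 1 < w.length → w.getD j 0 < w.getD (j + 1) 0)

/-- `r` is a hook subword of maximal length in `s`. -/
def IsMaxHookSubwordIn (r s : List ℕ) : Prop :=
  r.Sublist s ∧ IsHookWord r ∧
    ∀ t : List ℕ, t.Sublist s → IsHookWord t → t.length ≤ r.length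

/-- A (semistandard) decomposition tableau of shifted shape `lam`. -/
def IsDecompTab (lam : List ℕ) (T : ℕ × ℕ → ℕ) : Prop :=
  (∀ i, 1 ≤ i → i ≤ lam.length → IsHookWord (rowWord lam T i)) ∧
  (∀ i, 1 ≤ i → i + 1 ≤ lam.length →
    IsMaxHookSubwordIn (rowWord lam T i) (rowWord lam T (i + 1) ++ rowWord lam T i))

/-! ## Set-valued decomposition tableaux -/

/-- A set-valued decomposition tableau: boxes of `SD_lam` are filled by finite nonempty
sets of positive integers, all of whose distributions are decomposition tableaux. -/
def IsSetDecompTab (lam : List ℕ) (T : ℕ × ℕ → Finset ℕ) : Prop :=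
  (∀ i j, InSD lam i j → (T (i, j)).Nonempty ∧ 0 ∉ T (i, j)) ∧
  (∀ d : ℕ × ℕ → ℕ, (∀ i j, InSD lam i j → d (i, j) ∈ T (i, j)) → IsDecompTab lam d)

/-- Set-valued decomposition tableau whose every entry is contained in `{1, …, n}`. -/
def IsSetDecompTabN (n : ℕ) (lam : List ℕ) (T : ℕ × ℕ → Finset ℕ) : Prop :=
  IsSetDecompTab lam T ∧ ∀ i j, InSD lam i j → ∀ v ∈ T (i, j), v ≤ n

/-! ## Reverse row reading words -/

/-- The boxes of `SD_lam` in reverse row reading order: the first row read right to left,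
then the second row right to left, and so on. -/
def revrowBoxes (lam : List ℕ) : List (ℕ × ℕ) :=
  (List.range lam.length).flatMap fun r =>
    (List.range (lam.getD r 0)).reverse.map fun j => (r + 1, r + 1 + j)

/-- Position of a box in the reverse row reading order. -/
def boxIdx (lam : List ℕ) (b : ℕ × ℕ) : ℕ := (revrowBoxes lam).idxOf b

/-- The reverse row reading word of a set-valued tableau, with each letter labelled by
its box: entries within each box are listed in decreasing order. -/
def revrowEntries (lam : List ℕ) (T : ℕ × ℕ → Finset ℕ) : List ((ℕ × ℕ) × ℕ) :=
  (revrowBoxes lam).flatMap fun b => (((T b).sort (· ≤ ·)).reverse).map fun v => (b, v)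

/-- The reverse row reading word of a set-valued tableau. -/
def revrowWord (lam : List ℕ) (T : ℕ × ℕ → Finset ℕ) : List ℕ :=
  (revrowEntries lam T).map Prod.snd

/-- `wtSet lam T k` is the number of boxes of `T` whose entry contains `k`. -/
noncomputable def wtSet (lam : List ℕ) (T : ℕ × ℕ → Finset ℕ) (k : ℕ) : ℕ :=
  ((revrowBoxes lam).filter fun b => decide (k ∈ T b)).length

/-- `wtNum lam T k` is the number of boxes of an ordinary tableau `T` equal to `k`. -/
noncomputable def wtNum (lam : List ℕ) (T : ℕ × ℕ → ℕ) (k : ℕ) : ℕ :=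
  ((revrowBoxes lam).filter fun b => decide (T b = k)).length

/-! ## Parenthesis pairing: `i`-unpaired letters -/

/-- Number of unmatched `i+1`'s ( "(" ) after scanning `u` left to right,
where each `i` ( ")" ) cancels the most recent unmatched `i+1`. -/
def openCount (i : ℕ) (u : List ℕ) : ℕ :=
  u.foldl (fun acc a => if a = i + 1 then acc + 1 else if a = i then acc - 1 else acc) 0

/-- Number of unmatched `i`'s ( ")" ) after scanning `u` right to left,
where each `i+1` ( "(" ) cancels the nearest unmatched `i` to its right. -/
def closeCount (i : ℕ) (u : List ℕ) : ℕ :=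
  u.foldr (fun a acc => if a = i then acc + 1 else if a = i + 1 then acc - 1 else acc) 0

/-- Position `p` of `w` holds an `i`-unpaired letter equal to `i+1`. -/
def UnpairedHigh (i : ℕ) (w : List ℕ) (p : ℕ) : Prop :=
  p < w.length ∧ w.getD p 0 = i + 1 ∧ closeCount i (w.drop (p + 1)) = 0

/-- Position `p` of `w` holds an `i`-unpaired letter equal to `i`. -/
def UnpairedLow (i : ℕ) (w : List ℕ) (p : ℕ) : Prop :=
  p < w.length ∧ w.getD p 0 = i ∧ openCount i (w.take p) = 0

instance (i : ℕ) (w : List ℕ) (p : ℕ) : Decidable (UnpairedHigh i w p) := by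
  unfold UnpairedHigh; infer_instance

instance (i : ℕ) (w : List ℕ) (p : ℕ) : Decidable (UnpairedLow i w p) := by
  unfold UnpairedLow; infer_instance

/-- The number of `i`-unpaired letters equal to `i+1` in `w`. -/
def numUnpairedHigh (i : ℕ) (w : List ℕ) : ℕ :=
  ((List.range w.length).filter fun p => decide (UnpairedHigh i w p)).length

/-- The number of `i`-unpaired letters equal to `i` in `w`. -/
def numUnpairedLow (i : ℕ) (w : List ℕ) : ℕ :=
  ((List.range w.length).filter fun p => decide (UnpairedLow i w p)).length

/-! ## Iterated partial operators and string lengths -/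

/-- Iterate a partial operator, with the convention that `0` (i.e. `none`) is absorbing. -/
def iterOpt {α : Type*} (g : α → Option α) : ℕ → α → Option α
  | 0, a => some a
  | k + 1, a => (g a).bind (iterOpt g k)

/-- `m` is the exact string length `sup {k | g^k a ≠ 0}` of `a` under `g`. -/
def HasStringLen {α : Type*} (g : α → Option α) (a : α) (m : ℕ) : Prop :=
  iterOpt g m a ≠ none ∧ iterOpt g (m + 1) a = none

/-! ## The queer crystal operators on set-valued decomposition tableaux -/

/-- The raising crystal operator `e_i` on set-valued decomposition tableaux. -/
noncomputable def eCrystal (lam : List ℕ) (i : ℕ) (T : ℕ × ℕ → Finset ℕ) :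
    Option (ℕ × ℕ → Finset ℕ) :=
  if h : ∃ p, UnpairedHigh i (revrowWord lam T) p then
    let xy := ((revrowEntries lam T).getD (Nat.find h) ((0, 0), 0)).1
    let T1 := Function.update T xy (insert i ((T xy).erase (i + 1)))
    if IsSetDecompTab lam T1 then some T1
    else if _hab : ∃ m, m < boxIdx lam xy ∧ i ∈ T ((revrowBoxes lam).getD m (0, 0)) ∧
        i + 1 ∈ T ((revrowBoxes lam).getD m (0, 0)) then
      let m := Nat.findGreatest (fun m => m < boxIdx lam xy ∧
          i ∈ T ((revrowBoxes lam).getD m (0, 0)) ∧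
          i + 1 ∈ T ((revrowBoxes lam).getD m (0, 0))) (boxIdx lam xy)
      let ab := (revrowBoxes lam).getD m (0, 0)
      some (Function.update (Function.update T ab ((T ab).erase (i + 1))) xy
        (insert i (T xy)))
    else none
  else none

/-- The lowering crystal operator `f_i` on set-valued decomposition tableaux. -/
noncomputable def fCrystal (lam : List ℕ) (i : ℕ) (T : ℕ × ℕ → Finset ℕ) :
    Option (ℕ × ℕ → Finset ℕ) :=
  if _h : ∃ p, UnpairedLow i (revrowWord lam T) p then
    let p := Nat.findGreatest (fun p => UnpairedLow i (revrowWord lam T) p)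
      (revrowWord lam T).length
    let xy := ((revrowEntries lam T).getD p ((0, 0), 0)).1
    let T1 := Function.update T xy (insert (i + 1) ((T xy).erase i))
    if IsSetDecompTab lam T1 then some T1
    else if hab : ∃ m, boxIdx lam xy < m ∧ m < (revrowBoxes lam).length ∧
        i ∈ T ((revrowBoxes lam).getD m (0, 0)) ∧
        i + 1 ∈ T ((revrowBoxes lam).getD m (0, 0)) then
      let ab := (revrowBoxes lam).getD (Nat.find hab) (0, 0)
      some (Function.update (Function.update T ab ((T ab).erase i)) xy
        (insert (i + 1) (T xy)))
    else none
  else none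

/-- The queer raising operator `e_1̄` on set-valued decomposition tableaux. -/
noncomputable def eBarCrystal (lam : List ℕ) (T : ℕ × ℕ → Finset ℕ) :
    Option (ℕ × ℕ → Finset ℕ) :=
  if h : ∃ p, p < (revrowWord lam T).length ∧ (revrowWord lam T).getD p 0 = 2 ∧
      ∀ q < p, (revrowWord lam T).getD q 0 ≠ 1 then
    let xy := ((revrowEntries lam T).getD (Nat.find h) ((0, 0), 0)).1
    if 1 ∈ T xy then none
    else some (Function.update T xy (insert 1 ((T xy).erase 2)))
  else none

/-- The queer lowering operator `f_1̄` on set-valued decomposition tableaux. -/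
noncomputable def fBarCrystal (lam : List ℕ) (T : ℕ × ℕ → Finset ℕ) :
    Option (ℕ × ℕ → Finset ℕ) :=
  if h : ∃ p, p < (revrowWord lam T).length ∧ (revrowWord lam T).getD p 0 = 1 ∧
      ∀ q < p, (revrowWord lam T).getD q 0 ≠ 2 then
    let xy := ((revrowEntries lam T).getD (Nat.find h) ((0, 0), 0)).1
    some (Function.update T xy (insert 2 ((T xy).erase 1)))
  else none
/-! ## Multiset-valued decomposition tableaux -/

/-- A multiset-valued decomposition tableau in which only the entry `1` may repeat
within a box, all of whose distributions are decomposition tableaux. -/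
def IsMultisetDecompTab (lam : List ℕ) (T : ℕ × ℕ → Multiset ℕ) : Prop :=
  (∀ i j, InSD lam i j → T (i, j) ≠ 0 ∧ 0 ∉ T (i, j) ∧
      ∀ v : ℕ, v ≠ 1 → (T (i, j)).count v ≤ 1) ∧
  (∀ d : ℕ × ℕ → ℕ, (∀ i j, InSD lam i j → d (i, j) ∈ T (i, j)) → IsDecompTab lam d)

/-- Reverse row reading word of a multiset-valued tableau, with boxes recorded. -/
def revrowEntriesM (lam : List ℕ) (T : ℕ × ℕ → Multiset ℕ) : List ((ℕ × ℕ) × ℕ) :=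
  (revrowBoxes lam).flatMap fun b => (((T b).sort (· ≤ ·)).reverse).map fun v => (b, v)

/-- Reverse row reading word of a multiset-valued tableau. -/
def revrowWordM (lam : List ℕ) (T : ℕ × ℕ → Multiset ℕ) : List ℕ :=
  (revrowEntriesM lam T).map Prod.snd

/-- The operator `e*_1̄` on multiset-valued decomposition tableaux: if the first `2` of
the reverse row reading word occurs before every `1`, change it to a `1`. -/
noncomputable def eStarBar (lam : List ℕ) (T : ℕ × ℕ → Multiset ℕ) :
    Option (ℕ × ℕ → Multiset ℕ) :=
  if h : ∃ p, p < (revrowWordM lam T).length ∧ (revrowWordM lam T).getD p 0 = 2 ∧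
      ∀ q < p, (revrowWordM lam T).getD q 0 ≠ 1 then
    let b := ((revrowEntriesM lam T).getD (Nat.find h) ((0, 0), 0)).1
    some (Function.update T b (1 ::ₘ (T b).erase 2))
  else none

/-- The operator `f*_1̄` on multiset-valued decomposition tableaux: if the first `1` of
the reverse row reading word occurs before every `2`, change it to a `2`. -/
noncomputable def fStarBar (lam : List ℕ) (T : ℕ × ℕ → Multiset ℕ) :
    Option (ℕ × ℕ → Multiset ℕ) :=
  if h : ∃ p, p < (revrowWordM lam T).length ∧ (revrowWordM lam T).getD p 0 = 1 ∧
      ∀ q < p, (revrowWordM lam T).getD q 0 ≠ 2 then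
    let b := ((revrowEntriesM lam T).getD (Nat.find h) ((0, 0), 0)).1
    some (Function.update T b (2 ::ₘ (T b).erase 1))
  else none

/-! ## Linked `i`-words and square-root crystal operators -/

/-- Characters of a linked `i`-word: `(`, `)` and `-`. -/
inductive PChar : Type
  | op : PChar
  | cl : PChar
  | dash : PChar
  deriving DecidableEq

/-- The linked `i`-word of a set-valued tableau, with each character labelled by its box:
a box containing `i` but not `i+1` gives `)`, a box containing `i+1` but not `i` gives `(`,
and a box containing both gives `)-(`; boxes are read in reverse row reading order. -/
def tokens (lam : List ℕ) (i : ℕ) (T : ℕ × ℕ → Finset ℕ) : List (PChar × (ℕ × ℕ)) :=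
  (revrowBoxes lam).flatMap fun b =>
    if i ∈ T b ∧ i + 1 ∈ T b then [(PChar.cl, b), (PChar.dash, b), (PChar.op, b)]
    else if i ∈ T b then [(PChar.cl, b)]
    else if i + 1 ∈ T b then [(PChar.op, b)]
    else []

/-- Unmatched `(`s after scanning left to right (ignoring dashes). -/
def openCnt (u : List PChar) : ℕ :=
  u.foldl (fun acc a => match a with
    | PChar.op => acc + 1
    | PChar.cl => acc - 1
    | PChar.dash => acc) 0

/-- Unmatched `)`s after scanning right to left (ignoring dashes). -/
def closeCnt (u : List PChar) : ℕ :=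
  u.foldr (fun a acc => match a with
    | PChar.cl => acc + 1
    | PChar.op => acc - 1
    | PChar.dash => acc) 0

/-- Position `p` holds an unpaired `(`. -/
def UnpairedOp (ws : List PChar) (p : ℕ) : Prop :=
  p < ws.length ∧ ws.getD p PChar.dash = PChar.op ∧ closeCnt (ws.drop (p + 1)) = 0

/-- Position `p` holds an unpaired `)`. -/
def UnpairedCl (ws : List PChar) (p : ℕ) : Prop :=
  p < ws.length ∧ ws.getD p PChar.dash = PChar.cl ∧ openCnt (ws.take p) = 0

/-- A fully matched (balanced) parenthesis word, ignoring dashes. -/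
def BalancedP (u : List PChar) : Prop :=
  u.count PChar.op = u.count PChar.cl ∧
  ∀ k, (u.take k).count PChar.cl ≤ (u.take k).count PChar.op

/-- The `(` at position `a` is matched with the `)` at position `b`. -/
def MatchedPair (ws : List PChar) (a b : ℕ) : Prop :=
  a < b ∧ b < ws.length ∧ ws.getD a PChar.dash = PChar.op ∧
  ws.getD b PChar.dash = PChar.cl ∧ BalancedP ((ws.drop (a + 1)).take (b - (a + 1)))

/-- Generating relation for equivalence classes of characters: a matched pair together
with everything between them lies in one class, and so do the three characters `)-(`
coming from a single box. -/
def LinkRel (ws : List PChar) (p q : ℕ) : Prop :=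
  (∃ a b, MatchedPair ws a b ∧ a ≤ p ∧ p ≤ b ∧ a ≤ q ∧ q ≤ b) ∨
  (∃ d, 1 ≤ d ∧ d + 1 < ws.length ∧ ws.getD d PChar.op = PChar.dash ∧
    (p = d - 1 ∨ p = d ∨ p = d + 1) ∧ (q = d - 1 ∨ q = d ∨ q = d + 1))

/-- Two positions lie in the same equivalence class of the linked `i`-word. -/
def SameClass (ws : List PChar) : ℕ → ℕ → Prop := Relation.ReflTransGen (LinkRel ws)

/-- The class of position `p` contains an unpaired `(`. -/
def HasUnpairedOpIn (ws : List PChar) (p : ℕ) : Prop :=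
  ∃ q, SameClass ws p q ∧ UnpairedOp ws q

/-- The class of position `p` contains an unpaired `)`. -/
def HasUnpairedClIn (ws : List PChar) (p : ℕ) : Prop :=
  ∃ q, SameClass ws p q ∧ UnpairedCl ws q

/-- Position `p` belongs to a left form: a class with no unpaired `)` that ends
with an unpaired `(`. -/
def IsLeftFormAt (ws : List PChar) (p : ℕ) : Prop :=
  p < ws.length ∧ HasUnpairedOpIn ws p ∧ ¬ HasUnpairedClIn ws p

/-- Position `p` belongs to a right form: a class with no unpaired `(` that starts
with an unpaired `)`. -/
def IsRightFormAt (ws : List PChar) (p : ℕ) : Prop :=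
  p < ws.length ∧ HasUnpairedClIn ws p ∧ ¬ HasUnpairedOpIn ws p

/-- The square-root raising operator `e'_i` on set-valued decomposition tableaux. -/
noncomputable def eSqrt (lam : List ℕ) (i : ℕ) (T : ℕ × ℕ → Finset ℕ) :
    Option (ℕ × ℕ → Finset ℕ) :=
  let tk := tokens lam i T
  let ws := tk.map Prod.fst
  if hc : ∃ p, UnpairedOp ws p ∧ HasUnpairedClIn ws p then
    -- the `)-(` at the end of the combined form: remove `i+1` from its box
    let b := (tk.getD (Nat.find hc) (PChar.op, (0, 0))).2
    some (Function.update T b ((T b).erase (i + 1)))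
  else if hl : ∃ p, IsLeftFormAt ws p then
    -- the `(` at the start of the first left form: add `i` to its box
    let b := (tk.getD (Nat.find hl) (PChar.op, (0, 0))).2
    some (Function.update T b (insert i (T b)))
  else none

/-- The square-root lowering operator `f'_i` on set-valued decomposition tableaux. -/
noncomputable def fSqrt (lam : List ℕ) (i : ℕ) (T : ℕ × ℕ → Finset ℕ) :
    Option (ℕ × ℕ → Finset ℕ) :=
  let tk := tokens lam i T
  let ws := tk.map Prod.fst
  if hc : ∃ p, UnpairedCl ws p ∧ HasUnpairedOpIn ws p then
    -- the `)-(` at the beginning of the combined form: remove `i` from its box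
    let b := (tk.getD (Nat.find hc) (PChar.op, (0, 0))).2
    some (Function.update T b ((T b).erase i))
  else if _hr : ∃ p, IsRightFormAt ws p then
    -- the `)` at the end of the last right form: add `i+1` to its box
    let b := (tk.getD (Nat.findGreatest (fun p => IsRightFormAt ws p) ws.length)
        (PChar.op, (0, 0))).2
    some (Function.update T b (insert (i + 1) (T b)))
  else none

/-- The square-root queer raising operator `e'_1̄`. -/
noncomputable def eBarSqrt (lam : List ℕ) (T : ℕ × ℕ → Finset ℕ) :
    Option (ℕ × ℕ → Finset ℕ) :=
  if h : ∃ m, m < (revrowBoxes lam).length ∧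
      (1 ∈ T ((revrowBoxes lam).getD m (0, 0)) ∨ 2 ∈ T ((revrowBoxes lam).getD m (0, 0))) then
    let b := (revrowBoxes lam).getD (Nat.find h) (0, 0)
    if 1 ∈ T b then
      if 2 ∈ T b then some (Function.update T b ((T b).erase 2)) else none
    else some (Function.update T b (insert 1 (T b)))
  else none

/-- The square-root queer lowering operator `f'_1̄`. -/
noncomputable def fBarSqrt (lam : List ℕ) (T : ℕ × ℕ → Finset ℕ) :
    Option (ℕ × ℕ → Finset ℕ) :=
  if h : ∃ m, m < (revrowBoxes lam).length ∧
      (1 ∈ T ((revrowBoxes lam).getD m (0, 0)) ∨ 2 ∈ T ((revrowBoxes lam).getD m (0, 0))) then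
    let b := (revrowBoxes lam).getD (Nat.find h) (0, 0)
    if 2 ∈ T b then
      if 1 ∈ T b then some (Function.update T b ((T b).erase 1)) else none
    else some (Function.update T b (insert 2 (T b)))
  else none
/-! ## Abstract √gl_n- and √q_n-crystals -/

/-- The data of a crystal-like structure: a weight map (coordinates `1, …, n` are the
relevant ones) and partial raising/lowering operators indexed by `i ∈ [n-1]`. -/
structure SqGlData (B : Type*) where
  wt : B → ℕ → ℕ
  e : ℕ → B → Option B
  f : ℕ → B → Option B

/-- The axioms of a `√gl_n`-crystal. -/
def IsSqGlCrystal {B : Type*} (n : ℕ) (D : SqGlData B) : Prop :=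
  (∀ i, 1 ≤ i → i < n → ∀ b, ∃ ep ph : ℕ,
      HasStringLen (D.e i) b ep ∧ HasStringLen (D.f i) b ph ∧
      Even (ep + ph) ∧ (ph : ℤ) - ep = 2 * ((D.wt b i : ℤ) - D.wt b (i + 1))) ∧
  (∀ i, 1 ≤ i → i < n → ∀ b c, D.e i b = some c ↔ D.f i c = some b) ∧
  (∀ i, 1 ≤ i → i < n → ∀ b c, D.e i b = some c → ∀ ep, HasStringLen (D.e i) b ep →
      ∀ k, (D.wt c k : ℤ) - D.wt b k =
        if Even ep then (if k = i then 1 else 0) else (if k = i + 1 then -1 else 0))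

/-- The data of a queer crystal-like structure. -/
structure SqQData (B : Type*) extends SqGlData B where
  ebar : B → Option B
  fbar : B → Option B

/-- The axioms of a `√q_n`-crystal. -/
def IsSqQnCrystal {B : Type*} (n : ℕ) (D : SqQData B) : Prop :=
  IsSqGlCrystal n D.toSqGlData ∧
  (∀ i, 3 ≤ i → i < n → ∀ b,
      (D.e i b).bind D.ebar = (D.ebar b).bind (D.e i) ∧
      (D.f i b).bind D.ebar = (D.ebar b).bind (D.f i) ∧
      (D.e i b).bind D.fbar = (D.fbar b).bind (D.e i) ∧
      (D.f i b).bind D.fbar = (D.fbar b).bind (D.f i)) ∧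
  (∀ i, 3 ≤ i → i < n → ∀ b c, (D.ebar b = some c ∨ D.fbar b = some c) →
      (∀ m, HasStringLen (D.e i) b m ↔ HasStringLen (D.e i) c m) ∧
      (∀ m, HasStringLen (D.f i) b m ↔ HasStringLen (D.f i) c m)) ∧
  (∀ b, ∃ ep ph : ℕ, HasStringLen D.ebar b ep ∧ HasStringLen D.fbar b ph ∧
      ep + ph = (if D.wt b 1 = 0 ∧ D.wt b 2 = 0 then 0 else 2)) ∧
  (∀ b c, D.ebar b = some c ↔ D.fbar c = some b) ∧
  (∀ b c, D.ebar b = some c → ∀ ep, HasStringLen D.ebar b ep →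
      ∀ k, (D.wt c k : ℤ) - D.wt b k =
        if ep = 2 then (if k = 1 then 1 else 0) else (if k = 2 then -1 else 0))

/-- The square of a partial operator. -/
def sqOp {B : Type*} (g : B → Option B) : B → Option B := fun b => (g b).bind g

/-- The axioms of a (seminormal) `gl_n`-crystal for given weight map and operators. -/
def GlSeminormalAxioms {B : Type*} (n : ℕ) (wt : B → ℕ → ℕ)
    (E F : ℕ → B → Option B) : Prop :=
  (∀ i, 1 ≤ i → i < n → ∀ b c, E i b = some c ↔ F i c = some b) ∧
  (∀ i, 1 ≤ i → i < n → ∀ b c, E i b = some c →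
      ∀ k, (wt c k : ℤ) - wt b k = (if k = i then 1 else 0) - (if k = i + 1 then 1 else 0)) ∧
  (∀ i, 1 ≤ i → i < n → ∀ b, ∃ ep ph : ℕ,
      HasStringLen (E i) b ep ∧ HasStringLen (F i) b ph ∧
      (ph : ℤ) - ep = (wt b i : ℤ) - wt b (i + 1))

/-- The additional axioms making a `gl_n`-crystal into a `q_n`-crystal. -/
def QnExtraAxioms {B : Type*} (n : ℕ) (wt : B → ℕ → ℕ)
    (E F : ℕ → B → Option B) (Eb Fb : B → Option B) : Prop :=
  (∀ i, 3 ≤ i → i < n → ∀ b,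
      (E i b).bind Eb = (Eb b).bind (E i) ∧ (F i b).bind Eb = (Eb b).bind (F i) ∧
      (E i b).bind Fb = (Fb b).bind (E i) ∧ (F i b).bind Fb = (Fb b).bind (F i)) ∧
  (∀ i, 3 ≤ i → i < n → ∀ b c, (Eb b = some c ∨ Fb b = some c) →
      (∀ m, HasStringLen (E i) b m ↔ HasStringLen (E i) c m) ∧
      (∀ m, HasStringLen (F i) b m ↔ HasStringLen (F i) c m)) ∧
  (∀ b c, Eb b = some c ↔ Fb c = some b) ∧
  (∀ b c, Eb b = some c →
      ∀ k, (wt c k : ℤ) - wt b k = (if k = 1 then 1 else 0) - (if k = 2 then 1 else 0))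

/-- String length as a function (the supremum of the set of iterates that survive). -/
noncomputable def strLen {B : Type*} (g : B → Option B) (b : B) : ℕ :=
  sSup {k | iterOpt g k b ≠ none}

/-- Tensor product of `√gl_n`-crystal data. -/
noncomputable def tensorGl {B C : Type*} (DB : SqGlData B) (DC : SqGlData C) :
    SqGlData (B × C) where
  wt := fun bc k => DB.wt bc.1 k + DC.wt bc.2 k
  e := fun i bc =>
    if strLen (DB.e i) bc.1 ≤ strLen (DC.f i) bc.2 then
      (DC.e i bc.2).map fun c' => (bc.1, c')
    else (DB.e i bc.1).map fun b' => (b', bc.2)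
  f := fun i bc =>
    if strLen (DB.e i) bc.1 < strLen (DC.f i) bc.2 then
      (DC.f i bc.2).map fun c' => (bc.1, c')
    else (DB.f i bc.1).map fun b' => (b', bc.2)

/-- Tensor product of `√q_n`-crystal data. -/
noncomputable def tensorQ {B C : Type*} (DB : SqQData B) (DC : SqQData C) :
    SqQData (B × C) where
  toSqGlData := tensorGl DB.toSqGlData DC.toSqGlData
  ebar := fun bc =>
    if DB.wt bc.1 1 = 0 ∧ DB.wt bc.1 2 = 0 then (DC.ebar bc.2).map fun c' => (bc.1, c')
    else (DB.ebar bc.1).map fun b' => (b', bc.2)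
  fbar := fun bc =>
    if DB.wt bc.1 1 = 0 ∧ DB.wt bc.1 2 = 0 then (DC.fbar bc.2).map fun c' => (bc.1, c')
    else (DB.fbar bc.1).map fun b' => (b', bc.2)
/-! ## Generating functions -/

/-- A set-valued decomposition tableau, normalized to be empty off the shifted diagram. -/
def IsNormalizedSVDT (lam : List ℕ) (T : ℕ × ℕ → Finset ℕ) : Prop :=
  IsSetDecompTab lam T ∧ ∀ i j, ¬ InSD lam i j → T (i, j) = ∅

/-- A decomposition tableau, normalized to be `0` off the shifted diagram. -/
def IsNormalizedDT (lam : List ℕ) (T : ℕ × ℕ → ℕ) : Prop :=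
  IsDecompTab lam T ∧ ∀ i j, ¬ InSD lam i j → T (i, j) = 0

/-- `Σ_λ = ∑_{T ∈ SetDecTab(λ)} x^T` as a formal power series; variable `k` stands for
`x_{k+1}`, i.e. records occurrences of the letter `k+1`. -/
noncomputable def SigmaLam (lam : List ℕ) : MvPowerSeries ℕ ℤ :=
  fun d => (Set.ncard
    {T : ℕ × ℕ → Finset ℕ | IsNormalizedSVDT lam T ∧ ∀ k, wtSet lam T (k + 1) = d k} : ℤ)

/-- The Schur `P`-function `P_λ = ∑_{T ∈ DecTab(λ)} x^T` as a formal power series. -/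
noncomputable def SchurPfun (lam : List ℕ) : MvPowerSeries ℕ ℤ :=
  fun d => (Set.ncard
    {T : ℕ × ℕ → ℕ | IsNormalizedDT lam T ∧ ∀ k, wtNum lam T (k + 1) = d k} : ℤ)

/-! ## Marked (primed) shifted tableaux and `GP`-functions.
We encode the marked alphabet `1' < 1 < 2' < 2 < ⋯` into `ℕ` by `k' ↦ 2k - 1` and
`k ↦ 2k`, so primed letters are odd and the natural order is preserved. -/

/-- A semistandard marked shifted tableau (as a distribution): weakly increasing rows and
columns, no primed (odd) letter repeated in a row, no unprimed (even) letter repeated in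
a column. -/
def IsSemistandardMarked (lam : List ℕ) (d : ℕ × ℕ → ℕ) : Prop :=
  (∀ i j, InSD lam i j → InSD lam i (j + 1) → d (i, j) ≤ d (i, j + 1)) ∧
  (∀ i j, InSD lam i j → InSD lam (i + 1) j → d (i, j) ≤ d (i + 1, j)) ∧
  (∀ i j j', InSD lam i j → InSD lam i j' → j < j' → d (i, j) = d (i, j') →
    Even (d (i, j))) ∧
  (∀ i i' j, InSD lam i j → InSD lam i' j → i < i' → d (i, j) = d (i', j) →
    Odd (d (i, j)))

/-- A semistandard set-valued shifted tableau in the marked alphabet, with no primed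
letters on the main diagonal. -/
def IsSetSSMarkedShifted (lam : List ℕ) (T : ℕ × ℕ → Finset ℕ) : Prop :=
  (∀ i j, InSD lam i j → (T (i, j)).Nonempty ∧ ∀ v ∈ T (i, j), 1 ≤ v) ∧
  (∀ i, InSD lam i i → ∀ v ∈ T (i, i), Even v) ∧
  (∀ d : ℕ × ℕ → ℕ, (∀ i j, InSD lam i j → d (i, j) ∈ T (i, j)) →
    IsSemistandardMarked lam d)

/-- `wtMarked lam T k` is the total number of occurrences of `k` or `k'` in `T`. -/
noncomputable def wtMarked (lam : List ℕ) (T : ℕ × ℕ → Finset ℕ) (k : ℕ) : ℕ :=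
  ((revrowBoxes lam).map fun b =>
    ((T b).filter fun v => v = 2 * k - 1 ∨ v = 2 * k).card).sum

/-- The K-theoretic Schur `P`-function `GP_λ` as a formal power series; variable `k`
stands for `x_{k+1}`. -/
noncomputable def GPfun (lam : List ℕ) : MvPowerSeries ℕ ℤ :=
  fun d => (Set.ncard
    {T : ℕ × ℕ → Finset ℕ | IsSetSSMarkedShifted lam T ∧
      (∀ i j, ¬ InSD lam i j → T (i, j) = ∅) ∧
      ∀ k, wtMarked lam T (k + 1) = d k} : ℤ)

/-! ## Polynomial versions (variables `x_1, …, x_n`, i.e. `X 1, …, X n`) -/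

/-- The boxes of the (unshifted) Young diagram of `lam`, listed row by row. -/
def YDboxes (lam : List ℕ) : List (ℕ × ℕ) :=
  (List.range lam.length).flatMap fun r =>
    (List.range (lam.getD r 0)).map fun j => (r + 1, j + 1)

/-- A semistandard (unshifted) Young tableau: rows weakly increase, columns strictly
increase. -/
def IsSemistandardYT (lam : List ℕ) (d : ℕ × ℕ → ℕ) : Prop :=
  (∀ i j, InYD lam i j → InYD lam i (j + 1) → d (i, j) ≤ d (i, j + 1)) ∧
  (∀ i j, InYD lam i j → InYD lam (i + 1) j → d (i, j) < d (i + 1, j))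

/-- A semistandard set-valued (unshifted) tableau with entries in `{1, …, n}`,
normalized off the diagram. -/
def IsSetSSYT (n : ℕ) (lam : List ℕ) (T : ℕ × ℕ → Finset ℕ) : Prop :=
  (∀ i j, InYD lam i j → (T (i, j)).Nonempty ∧ ∀ v ∈ T (i, j), 1 ≤ v ∧ v ≤ n) ∧
  (∀ i j, ¬ InYD lam i j → T (i, j) = ∅) ∧
  (∀ d : ℕ × ℕ → ℕ, (∀ i j, InYD lam i j → d (i, j) ∈ T (i, j)) → IsSemistandardYT lam d)

/-- The symmetric Grothendieck polynomial `G_λ(x_1, …, x_n)`. -/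
noncomputable def Gpoly (n : ℕ) (lam : List ℕ) : MvPolynomial ℕ ℤ :=
  ∑ᶠ T ∈ {T : ℕ × ℕ → Finset ℕ | IsSetSSYT n lam T},
    ((YDboxes lam).map fun b =>
      ∏ v ∈ T b, (MvPolynomial.X v : MvPolynomial ℕ ℤ)).prod

/-- A semistandard set-valued marked shifted tableau with letters at most `n`,
normalized off the diagram. -/
def IsSetSSMarkedShiftedN (n : ℕ) (lam : List ℕ) (T : ℕ × ℕ → Finset ℕ) : Prop :=
  IsSetSSMarkedShifted lam T ∧ (∀ i j, ¬ InSD lam i j → T (i, j) = ∅) ∧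
  ∀ i j, InSD lam i j → ∀ v ∈ T (i, j), v ≤ 2 * n

/-- The K-theoretic Schur `P`-polynomial `GP_λ(x_1, …, x_n)`. -/
noncomputable def GPpoly (n : ℕ) (lam : List ℕ) : MvPolynomial ℕ ℤ :=
  ∑ᶠ T ∈ {T : ℕ × ℕ → Finset ℕ | IsSetSSMarkedShiftedN n lam T},
    ((revrowBoxes lam).map fun b =>
      ∏ v ∈ T b, (MvPolynomial.X ((v + 1) / 2) : MvPolynomial ℕ ℤ)).prod

/-- The character of the `m`-th tensor power of the standard `√q_n`-crystal, whose
elements are the nonempty subsets of `{1, …, n}` with weight the indicator vector. -/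
noncomputable def standardChar (n m : ℕ) : MvPolynomial ℕ ℤ :=
  ∑ b : Fin m → {S : Finset (Fin n) // S.Nonempty},
    ∏ j : Fin m, ∏ k ∈ (b j).1, (MvPolynomial.X ((k : ℕ) + 1) : MvPolynomial ℕ ℤ)

/-!
Let `u` and `v` be rows `i + 1` and `i`, read as words `u_1 ⋯ u_m` and `v_1 ⋯ v_n` with
`u_c = T_{i+1,i+c}`, `v_c = T_{i,i+c-1}` and `m < n`. A forbidden configuration yields a hook
subword of `u v` of length `n + 1`: `u_1 ⋯ u_j u_k v_{j+1} ⋯ v_n` in case (a), and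
`u_1 ⋯ u_k v_{j+1} v_{k+1} ⋯ v_n` in case (b), where `v_{j+1} < v_{k+1}` makes `v` strictly
increasing from `v_{k+1}` on.

Conversely, split a hook subword `t` of `u v` as `t_u t_v`, with `t_u` ending at `u_e` and
`t_v` starting at `v_f`. If `t` ascends at the junction, the failure of (b) gives
`v_{e+1} ≤ v_f`; as a hook word increases strictly after an ascent, the rest of `t_v` lies in
`v_{e+2} ⋯ v_n`. If `t` descends there, `t_u` is weakly decreasing and `|t_u| < f`: otherwise
`f > 1` by (a), and the `(f-1)`-st letter `u_c` of `t_u` satisfies `f ≤ c + 1` and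
`u_e ≤ u_c`, so the failure of (a) and (b) gives `v_f ≤ u_e < v_{c+1}` and
`v_{e+1} ≤ v_{c+1}`, against the strict increase of `v` after the ascent `v_f < v_{c+1}`.
Either way `|t| ≤ n`.
-/

namespace List

variable {α : Type*}

theorem getD_take_of_lt {l : List α} {d : α} {n i : ℕ} (hi : i < n) :
    (l.take n).getD i d = l.getD i d := by
  simp [getD_eq_getElem?_getD, hi]

theorem getD_drop {l : List α} {d : α} {n i : ℕ} : (l.drop n).getD i d = l.getD (n + i) d := by
  simp [getD_eq_getElem?_getD]

theorem getD_mem {l : List α} {d : α} {i : ℕ} (hi : i < l.length) : l.getD i d ∈ l := by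
  rw [getD_eq_getElem _ _ hi]
  exact getElem_mem hi

theorem pairwise_of_getD {R : α → α → Prop} {l : List α} {d : α}
    (h : ∀ i j, i < j → j < l.length → R (l.getD i d) (l.getD j d)) : l.Pairwise R :=
  pairwise_iff_getElem.mpr fun i j hi hj hij => by
    have := h i j hij hj
    rwa [getD_eq_getElem _ _ hi, getD_eq_getElem _ _ hj] at this

theorem Sublist.exists_orderEmbedding_getD {l l' : List α} (h : l.Sublist l') (d : α) :
    ∃ f : ℕ ↪o ℕ, ∀ i < l.length, f i < l'.length ∧ l.getD i d = l'.getD (f i) d := by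
  obtain ⟨f, hf⟩ := sublist_iff_exists_orderEmbedding_getElem?_eq.mp h
  refine ⟨f, fun i hi => ?_⟩
  have hfi := hf i
  rw [getElem?_eq_getElem hi] at hfi
  have hlt : f i < l'.length := by
    by_contra! hle
    rw [getElem?_eq_none hle] at hfi
    exact Option.some_ne_none _ hfi
  rw [getElem?_eq_getElem hlt] at hfi
  rw [getD_eq_getElem _ _ hi, getD_eq_getElem _ _ hlt]
  exact ⟨hlt, Option.some_injective _ hfi⟩

end List

namespace IsHookWord

variable {w : List ℕ}

theorem ne_nil (hw : IsHookWord w) : w ≠ [] := by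
  obtain ⟨-, m, hm1, hm2, -⟩ := hw
  rintro rfl
  simp at hm2
  omega

theorem getD_lt_getD (hw : IsHookWord w) {a b c : ℕ} (hab : a < b) (hbc : b < c)
    (hc : c < w.length) (h : w.getD a 0 < w.getD b 0) : w.getD b 0 < w.getD c 0 := by
  obtain ⟨-, m, -, -, hdec, hinc⟩ := hw
  have hmb : m ≤ b := by
    by_contra! hbm
    have hle : ∀ n, a ≤ n → n ≤ b → w.getD n 0 ≤ w.getD a 0 := by
      intro n han hnb
      induction n, han using Nat.le_induction with
      | base => exact le_rfl
      | succ n _ ih => exact (hdec n (by omega)).trans (ih (by omega))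
    exact (hle b hab.le le_rfl).not_gt h
  induction c, hbc using Nat.le_induction with
  | base => exact hinc b (by omega) hc
  | succ c _ ih => exact (ih (by omega)).trans (hinc c (by omega) hc)

theorem getD_le_getD (hw : IsHookWord w) {a b c : ℕ} (hab : a < b) (hbc : b < c)
    (hc : c < w.length) (h : w.getD c 0 ≤ w.getD b 0) : w.getD b 0 ≤ w.getD a 0 := by
  by_contra! hlt
  exact (hw.getD_lt_getD hab hbc hc hlt).not_ge h

theorem getD_lt_getD_of_le (hw : IsHookWord w) {a b c : ℕ} (hab : a < b) (hbc : b ≤ c)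
    (hc : c < w.length) (h : w.getD a 0 < w.getD b 0) : w.getD a 0 < w.getD c 0 := by
  rcases hbc.eq_or_lt with rfl | hbc
  · exact h
  · exact h.trans (hw.getD_lt_getD hab hbc hc h)

theorem getD_le_getD_of_le (hw : IsHookWord w) {a b c : ℕ} (hab : a ≤ b) (hbc : b < c)
    (hc : c < w.length) (h : w.getD c 0 ≤ w.getD b 0) : w.getD c 0 ≤ w.getD a 0 := by
  rcases hab.eq_or_lt with rfl | hab
  · exact h
  · exact h.trans (hw.getD_le_getD hab hbc hc h)

theorem pairwise_ge_take_append (hw : IsHookWord w) {b c : ℕ} (hbc : b < c)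
    (hc : c < w.length) (h : w.getD c 0 ≤ w.getD b 0) :
    (w.take (b + 1) ++ [w.getD c 0]).Pairwise (· ≥ ·) := by
  have hlen : (w.take (b + 1)).length = b + 1 := by simp; omega
  have hget : ∀ i, i ≤ b → (w.take (b + 1) ++ [w.getD c 0]).getD i 0 = w.getD i 0 := by
    intro i hi
    rw [List.getD_append _ _ _ _ (by omega), List.getD_take_of_lt (by omega)]
  refine List.pairwise_of_getD (d := 0) fun i i' hii' hi' => ?_
  simp only [List.length_append, hlen, List.length_singleton] at hi'
  rw [hget i (by omega)]
  rcases Nat.lt_or_ge i' (b + 1) with hi' | hi'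
  · rw [hget i' (by omega)]
    exact hw.getD_le_getD hii' (by omega) hc (hw.getD_le_getD_of_le (by omega) hbc hc h)
  · rw [List.getD_append_right _ _ _ _ (by omega), hlen, show i' - (b + 1) = 0 by omega]
    exact hw.getD_le_getD_of_le (by omega) hbc hc h

theorem pairwise_lt_cons_drop (hw : IsHookWord w) {a b : ℕ} (hab : a < b)
    (hb : b < w.length) (h : w.getD a 0 < w.getD b 0) :
    (w.getD a 0 :: w.drop b).Pairwise (· < ·) := by
  have hlt : ∀ i, b + i < w.length → w.getD a 0 < w.getD (b + i) 0 :=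
    fun i hi => hw.getD_lt_getD_of_le hab (by omega) hi h
  refine List.pairwise_of_getD (d := 0) fun i i' hii' hi' => ?_
  simp only [List.length_cons, List.length_drop] at hi'
  obtain ⟨i', rfl⟩ := Nat.exists_eq_add_of_lt hii'
  rw [List.getD_cons_succ, List.getD_drop]
  rcases i with _ | i
  · exact hlt _ (by omega)
  · rw [List.getD_cons_succ, List.getD_drop]
    exact hw.getD_lt_getD (by omega) (by omega) (by omega) (hlt i (by omega))

theorem cons (hw : IsHookWord w) {a : ℕ} (ha : w.getD 0 0 ≤ a) : IsHookWord (a :: w) := by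
  have hw0 : 0 < w.getD 0 0 := by
    obtain ⟨x, l, rfl⟩ := List.exists_cons_of_ne_nil hw.ne_nil
    exact hw.1 x (by simp)
  obtain ⟨hpos, m, hm1, hm2, hdec, hinc⟩ := hw
  refine ⟨?_, m + 1, by omega, by simpa using hm2, ?_, ?_⟩
  · rintro x (_ | ⟨_, hx⟩)
    · omega
    · exact hpos x hx
  · rintro (_ | j) hj
    · simpa using ha
    · simpa using hdec j (by omega)
  · rintro (_ | j) hj1 hj2
    · omega
    · simpa using hinc j (by omega) (by simpa using hj2)

theorem append_left (hw : IsHookWord w) {d : List ℕ} (hd : d.Pairwise (· ≥ ·))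
    (hdw : ∀ x ∈ d, w.getD 0 0 ≤ x) : IsHookWord (d ++ w) := by
  induction d with
  | nil => exact hw
  | cons a d ih =>
    rw [List.pairwise_cons] at hd
    refine (ih hd.2 fun x hx => hdw x (by simp [hx])).cons ?_
    cases d with
    | nil => simpa using hdw a (by simp)
    | cons b d => simpa using hd.1 b (by simp)

theorem concat (hw : IsHookWord w) {a : ℕ} (ha : w.getD (w.length - 1) 0 < a) :
    IsHookWord (w ++ [a]) := by
  obtain ⟨hpos, m, hm1, hm2, hdec, hinc⟩ := hw
  have hget : ∀ j, j < w.length → (w ++ [a]).getD j 0 = w.getD j 0 :=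
    fun j hj => List.getD_append _ _ _ _ hj
  refine ⟨?_, m, hm1, by simp; omega, ?_, ?_⟩
  · intro x hx
    rcases List.mem_append.mp hx with hx | hx
    · exact hpos x hx
    · simp only [List.mem_singleton] at hx
      omega
  · intro j hj
    rw [hget j (by omega), hget (j + 1) (by omega)]
    exact hdec j hj
  · intro j hj1 hj2
    simp only [List.length_append, List.length_singleton] at hj2
    rw [hget j (by omega)]
    rcases Nat.lt_or_ge (j + 1) w.length with hj | hj
    · rw [hget (j + 1) hj]
      exact hinc j hj1 hj
    · rw [List.getD_append_right _ _ _ _ hj, show j + 1 - w.length = 0 by omega,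
        show j = w.length - 1 by omega]
      simpa using ha

theorem append_right (hw : IsHookWord w) {i : List ℕ} (hi : i.Pairwise (· < ·))
    (hwi : ∀ x ∈ i, w.getD (w.length - 1) 0 < x) : IsHookWord (w ++ i) := by
  induction i generalizing w with
  | nil => simpa using hw
  | cons a i ih =>
    rw [List.pairwise_cons] at hi
    rw [← List.singleton_append, ← List.append_assoc]
    refine ih (hw.concat (hwi a (by simp))) hi.2 fun x hx => ?_
    simpa using hi.1 x hx

theorem take (hw : IsHookWord w) {n : ℕ} (hn : 0 < n) : IsHookWord (w.take n) := by
  obtain ⟨hpos, m, hm1, hm2, hdec, hinc⟩ := hw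
  have hget : ∀ j, j < n → (w.take n).getD j 0 = w.getD j 0 :=
    fun j hj => List.getD_take_of_lt hj
  refine ⟨fun x hx => hpos x (List.mem_of_mem_take hx), min m n, by omega,
    by simp; omega, fun j hj => ?_, fun j hj1 hj2 => ?_⟩
  · rw [hget j (by omega), hget (j + 1) (by omega)]
    exact hdec j (by omega)
  · simp only [List.length_take] at hj2
    rw [hget j (by omega), hget (j + 1) (by omega)]
    exact hinc j (by omega) (by omega)

theorem drop (hw : IsHookWord w) {n : ℕ} (hn : n < w.length) : IsHookWord (w.drop n) := by
  obtain ⟨hpos, m, hm1, hm2, hdec, hinc⟩ := hw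
  have hget : ∀ j, (w.drop n).getD j 0 = w.getD (n + j) 0 := fun j => List.getD_drop
  refine ⟨fun x hx => hpos x (List.mem_of_mem_drop hx), max 1 (m - n), by omega,
    by simp; omega, fun j hj => ?_, fun j hj1 hj2 => ?_⟩
  · rw [hget, hget]
    exact hdec (n + j) (by omega)
  · simp only [List.length_drop] at hj2
    rw [hget, hget]
    exact hinc (n + j) (by omega) (by omega)

end IsHookWord

section TwoRows

variable {u v : List ℕ}

/-- With `u`, `v` rows `i + 1` and `i` and positions counted from `0`, this is configuration
(a) or (b) at the indices `j` and `k + 1` of the tableau; `j = 0` gives the conditions on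
`T_{i,i}`. -/
def ExtendsHook (u v : List ℕ) (j k : ℕ) : Prop :=
  j ≤ k ∧ k < u.length ∧
    ((v.getD j 0 ≤ u.getD k 0 ∧ (j = 0 ∨ u.getD k 0 ≤ u.getD (j - 1) 0)) ∨
      (u.getD k 0 < v.getD j 0 ∧ v.getD j 0 < v.getD (k + 1) 0))

theorem exists_hookWord_sublist_append_of_le (hu : IsHookWord u) (hv : IsHookWord v)
    (hlen : u.length < v.length) {j k : ℕ} (hjk : j ≤ k) (hk : k < u.length)
    (hvu : v.getD j 0 ≤ u.getD k 0) (hu' : j = 0 ∨ u.getD k 0 ≤ u.getD (j - 1) 0) :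
    ∃ t : List ℕ, t.Sublist (u ++ v) ∧ IsHookWord t ∧ t.length = v.length + 1 := by
  set x := u.getD k 0
  have hd : (u.take j ++ [x]).Pairwise (· ≥ ·) := by
    cases j with
    | zero => simp
    | succ b =>
      have hb := hu'.resolve_left b.succ_ne_zero
      rw [Nat.add_sub_cancel] at hb
      exact hu.pairwise_ge_take_append (by omega) hk hb
  have hxd : ∀ y ∈ u.take j ++ [x], x ≤ y := by
    intro y hy
    rcases List.mem_append.mp hy with hy | hy
    · exact (List.pairwise_append.mp hd).2.2 y hy x (List.mem_singleton_self x)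
    · rw [List.mem_singleton.mp hy]
  have hxu : x ∈ u.drop j := by
    rw [show x = (u.drop j).getD (k - j) 0 by rw [List.getD_drop, Nat.add_sub_cancel' hjk]]
    exact List.getD_mem (by simp; omega)
  refine ⟨(u.take j ++ [x]) ++ v.drop j, ?_, ?_, by simp; omega⟩
  · refine List.Sublist.append ?_ (List.drop_sublist j v)
    have h := (List.singleton_sublist.mpr hxu).append_left (u.take j)
    rwa [List.take_append_drop] at h
  · refine (hv.drop (by omega)).append_left hd fun y hy => ?_
    rw [List.getD_drop, Nat.add_zero]
    exact hvu.trans (hxd y hy)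

theorem exists_hookWord_sublist_append_of_lt (hu : IsHookWord u) (hv : IsHookWord v)
    (hlen : u.length < v.length) {j k : ℕ} (hjk : j ≤ k) (hk : k < u.length)
    (huv : u.getD k 0 < v.getD j 0) (hv' : v.getD j 0 < v.getD (k + 1) 0) :
    ∃ t : List ℕ, t.Sublist (u ++ v) ∧ IsHookWord t ∧ t.length = v.length + 1 := by
  set x := v.getD j 0
  have hi := hv.pairwise_lt_cons_drop (show j < k + 1 by omega) (by omega) hv'
  have hxv : x ∈ v.take (k + 1) := by
    rw [show x = (v.take (k + 1)).getD j 0 from (List.getD_take_of_lt (by omega)).symm]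
    exact List.getD_mem (by simp; omega)
  refine ⟨u.take (k + 1) ++ (x :: v.drop (k + 1)), ?_, ?_, by simp; omega⟩
  · refine List.Sublist.append (List.take_sublist _ u) ?_
    have h := (List.singleton_sublist.mpr hxv).append (List.Sublist.refl (v.drop (k + 1)))
    rwa [List.take_append_drop] at h
  · refine (hu.take (show 0 < k + 1 by omega)).append_right hi fun y hy => ?_
    rw [List.length_take, min_eq_left (by omega), Nat.add_sub_cancel,
      List.getD_take_of_lt (show k < k + 1 by omega)]
    rcases List.mem_cons.mp hy with rfl | hy
    · exact huv
    · exact huv.trans ((List.pairwise_cons.mp hi).1 y hy)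

theorem exists_hookWord_sublist_append_of_extendsHook (hu : IsHookWord u)
    (hv : IsHookWord v) (hlen : u.length < v.length) {j k : ℕ} (h : ExtendsHook u v j k) :
    ∃ t : List ℕ, t.Sublist (u ++ v) ∧ IsHookWord t ∧ t.length = v.length + 1 := by
  obtain ⟨hjk, hk, ⟨hvu, hu'⟩ | ⟨huv, hv'⟩⟩ := h
  · exact exists_hookWord_sublist_append_of_le hu hv hlen hjk hk hvu hu'
  · exact exists_hookWord_sublist_append_of_lt hu hv hlen hjk hk huv hv'

theorem getD_lt_getD_zero_of_not_extendsHook (hno : ¬ ∃ j k, ExtendsHook u v j k) {k : ℕ}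
    (hk : k < u.length) : u.getD k 0 < v.getD 0 0 := by
  by_contra! h
  exact hno ⟨0, k, k.zero_le, hk, .inl ⟨h, .inl rfl⟩⟩

theorem getD_le_getD_of_not_extendsHook (hno : ¬ ∃ j k, ExtendsHook u v j k) {j k : ℕ}
    (hjk : j ≤ k) (hk : k < u.length) (h : u.getD k 0 < v.getD j 0) :
    v.getD (k + 1) 0 ≤ v.getD j 0 := by
  by_contra! h'
  exact hno ⟨j, k, hjk, hk, .inr ⟨h, h'⟩⟩

theorem add_one_lt_of_not_extendsHook (hv : IsHookWord v) (hlen : u.length < v.length)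
    (hno : ¬ ∃ j k, ExtendsHook u v j k) {j j' e : ℕ} (hje : j ≤ e) (he : e < u.length)
    (huv : u.getD e 0 < v.getD j 0) (hjj' : j < j')
    (hv' : v.getD j 0 < v.getD j' 0) : e + 1 < j' := by
  have hle := getD_le_getD_of_not_extendsHook hno hje he huv
  by_contra! hj'e
  have := hv.getD_lt_getD_of_le hjj' hj'e (by omega) hv'
  omega

theorem getD_lt_getD_of_not_extendsHook (hv : IsHookWord v) (hlen : u.length < v.length)
    (hno : ¬ ∃ j k, ExtendsHook u v j k) {i j e : ℕ} (hie : i < e) (he : e < u.length)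
    (hji : j ≤ i + 1) (hu : u.getD e 0 ≤ u.getD i 0) : u.getD e 0 < v.getD j 0 := by
  have hlt : u.getD e 0 < v.getD (i + 1) 0 := by
    by_contra! h
    exact hno ⟨i + 1, e, hie, he, .inl ⟨h, .inr hu⟩⟩
  have hle := getD_le_getD_of_not_extendsHook hno (by omega) he hlt
  by_contra! hvj
  have hji' : j < i + 1 := hji.lt_of_ne (by rintro rfl; omega)
  have := hv.getD_lt_getD hji' (show i + 1 < e + 1 by omega) (by omega) (hvj.trans_lt hlt)
  omega

theorem length_add_le_of_ascent (hv : IsHookWord v) (hlen : u.length < v.length)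
    (hno : ¬ ∃ j k, ExtendsHook u v j k) {tu tv : List ℕ} (htu : tu.Sublist u)
    (htv : tv.Sublist v) (hr : 0 < tu.length) (hs : 0 < tv.length)
    (htw : IsHookWord (tu ++ tv)) (hasc : tu.getD (tu.length - 1) 0 < tv.getD 0 0) :
    tu.length + tv.length ≤ v.length := by
  obtain ⟨I, hI⟩ := htu.exists_orderEmbedding_getD 0
  obtain ⟨J, hJ⟩ := htv.exists_orderEmbedding_getD 0
  set r := tu.length
  set s := tv.length
  have hre : r - 1 ≤ I (r - 1) := I.strictMono.id_le _
  have hsj := (J.strictMono.add_le_nat (s - 1) 0).trans_lt (hJ (s - 1) (by omega)).1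
  obtain ⟨he, hte⟩ := hI (r - 1) (by omega)
  obtain ⟨-, htj⟩ := hJ 0 hs
  rcases Nat.lt_or_ge (I (r - 1)) (J 0) with hej | hje
  · omega
  rcases Nat.lt_or_ge s 2 with hs2 | hs2
  · have := htu.length_le
    omega
  have hv01 : v.getD (J 0) 0 < v.getD (J 1) 0 := by
    have h := htw.getD_lt_getD (show r - 1 < r by omega) (show r < r + 1 by omega)
      (by simp; omega) (by
        rwa [List.getD_append _ _ _ _ (by omega), List.getD_append_right _ _ _ _ le_rfl,
          Nat.sub_self])
    rwa [List.getD_append_right _ _ _ _ le_rfl, List.getD_append_right _ _ _ _ (by omega),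
      Nat.sub_self, Nat.add_sub_cancel_left, htj, (hJ 1 (by omega)).2] at h
  rw [hte, htj] at hasc
  have := add_one_lt_of_not_extendsHook hv hlen hno hje he hasc
    (J.strictMono zero_lt_one) hv01
  have := (J.strictMono.add_le_nat (s - 2) 1).trans_lt
    (show s - 2 + 1 = s - 1 by omega ▸ (hJ (s - 1) (by omega)).1)
  omega

theorem length_add_le_of_descent (hv : IsHookWord v) (hlen : u.length < v.length)
    (hno : ¬ ∃ j k, ExtendsHook u v j k) {tu tv : List ℕ} (htu : tu.Sublist u)
    (htv : tv.Sublist v) (hr : 0 < tu.length) (hs : 0 < tv.length)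
    (htw : IsHookWord (tu ++ tv)) (hdesc : tv.getD 0 0 ≤ tu.getD (tu.length - 1) 0) :
    tu.length + tv.length ≤ v.length := by
  obtain ⟨I, hI⟩ := htu.exists_orderEmbedding_getD 0
  obtain ⟨J, hJ⟩ := htv.exists_orderEmbedding_getD 0
  set r := tu.length
  set s := tv.length
  have hsj := (J.strictMono.add_le_nat (s - 1) 0).trans_lt (hJ (s - 1) (by omega)).1
  suffices r ≤ J 0 by omega
  by_contra! hjr
  obtain ⟨he, hte⟩ := hI (r - 1) (by omega)
  obtain ⟨-, htj⟩ := hJ 0 hs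
  have hj0 : J 0 ≠ 0 := fun h0 => by
    have := getD_lt_getD_zero_of_not_extendsHook hno he
    rw [htj, hte, h0] at hdesc
    omega
  have hmid := htw.getD_le_getD (show J 0 - 1 < r - 1 by omega) (show r - 1 < r by omega)
    (by simp; omega) (by
      rwa [List.getD_append tu tv 0 (r - 1) (by omega), List.getD_append_right tu tv 0 r le_rfl,
        Nat.sub_self])
  rw [List.getD_append tu tv 0 (r - 1) (by omega), List.getD_append _ _ _ _ (by omega), hte,
    (hI (J 0 - 1) (by omega)).2] at hmid
  have hji : J 0 - 1 ≤ I (J 0 - 1) := I.strictMono.id_le _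
  have := getD_lt_getD_of_not_extendsHook (j := J 0) hv hlen hno (I.strictMono (by omega)) he
    (by omega) hmid
  rw [htj, hte] at hdesc
  omega

theorem length_le_of_not_extendsHook (hv : IsHookWord v) (hlen : u.length < v.length)
    (hno : ¬ ∃ j k, ExtendsHook u v j k) {t : List ℕ} (ht : t.Sublist (u ++ v))
    (htw : IsHookWord t) : t.length ≤ v.length := by
  obtain ⟨tu, tv, rfl, htu, htv⟩ := List.sublist_append_iff.mp ht
  have := htu.length_le
  have := htv.length_le
  rw [List.length_append]
  rcases Nat.eq_zero_or_pos tu.length with hr | hr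
  · omega
  rcases Nat.eq_zero_or_pos tv.length with hs | hs
  · omega
  rcases lt_or_ge (tu.getD (tu.length - 1) 0) (tv.getD 0 0) with hasc | hdesc
  · exact length_add_le_of_ascent hv hlen hno htu htv hr hs htw hasc
  · exact length_add_le_of_descent hv hlen hno htu htv hr hs htw hdesc

theorem isMaxHookSubwordIn_append_iff (hu : IsHookWord u) (hv : IsHookWord v)
    (hlen : u.length < v.length) :
    IsMaxHookSubwordIn v (u ++ v) ↔ ¬ ∃ j k, ExtendsHook u v j k := by
  refine ⟨?_, fun hno => ⟨List.sublist_append_right u v, hv,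
    fun t ht htw => length_le_of_not_extendsHook hv hlen hno ht htw⟩⟩
  rintro ⟨-, -, hmax⟩ ⟨j, k, h⟩
  obtain ⟨t, ht, htw, htlen⟩ := exists_hookWord_sublist_append_of_extendsHook hu hv hlen h
  have := hmax t ht htw
  omega

end TwoRows

theorem IsStrictPartition.getD_lt_getD {lam : List ℕ} (hlam : IsStrictPartition lam) {i : ℕ}
    (hi : 1 ≤ i) (hil : i + 1 ≤ lam.length) : lam.getD i 0 < lam.getD (i - 1) 0 := by
  have h := List.isChain_iff_getElem.mp hlam.1 (i - 1) (by omega)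
  simp only [Nat.sub_add_cancel hi] at h
  rwa [List.getD_eq_getElem _ _ (by omega), List.getD_eq_getElem _ _ (by omega)]

section RowWord

variable (lam : List ℕ) (T : ℕ × ℕ → ℕ)

@[simp]
theorem rowWord_length (i : ℕ) : (rowWord lam T i).length = lam.getD (i - 1) 0 := by
  simp [rowWord]

theorem rowWord_getD {i c : ℕ} (hc : c < lam.getD (i - 1) 0) :
    (rowWord lam T i).getD c 0 = T (i, i + c) := by
  rw [List.getD_eq_getElem _ _ (by simpa using hc)]
  simp [rowWord]

theorem exists_extendsHook_rowWord_iff {i : ℕ} (hlt : lam.getD i 0 < lam.getD (i - 1) 0) :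
    (∃ j k, ExtendsHook (rowWord lam T (i + 1)) (rowWord lam T i) j k) ↔
      ∃ j k : ℕ, 1 ≤ j ∧ j ≤ lam.getD i 0 ∧ 1 ≤ k ∧ k ≤ lam.getD i 0 ∧
        ((T (i, i) ≤ T (i + 1, i + k)) ∨
         (j < k ∧ T (i, i + j) ≤ T (i + 1, i + k) ∧ T (i + 1, i + k) ≤ T (i + 1, i + j)) ∨
         (T (i + 1, i + k) < T (i, i) ∧ T (i, i) < T (i, i + k)) ∨
         (j < k ∧ T (i + 1, i + k) < T (i, i + j) ∧ T (i, i + j) < T (i, i + k))) := by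
  have hU : ∀ c, c < lam.getD i 0 → (rowWord lam T (i + 1)).getD c 0 = T (i + 1, i + (c + 1)) :=
    fun c hc => by rw [rowWord_getD _ _ (by simpa using hc), Nat.add_right_comm, add_assoc]
  have hV : ∀ c, c < lam.getD (i - 1) 0 → (rowWord lam T i).getD c 0 = T (i, i + c) :=
    fun c hc => rowWord_getD _ _ hc
  have hV0 : (rowWord lam T i).getD 0 0 = T (i, i) := hV 0 (by omega)
  constructor
  · rintro ⟨j, k, hjk, hk, ⟨hvu, hu⟩ | ⟨huv, hv⟩⟩ <;>
      simp only [rowWord_length, Nat.add_sub_cancel] at hk <;>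
      rw [hU k hk] at * <;> rcases j with _ | j
    · exact ⟨1, k + 1, le_rfl, by omega, by omega, by omega, .inl (by rwa [hV0] at hvu)⟩
    · rw [hV (j + 1) (by omega)] at hvu
      rw [Nat.add_sub_cancel, hU j (by omega)] at hu
      exact ⟨j + 1, k + 1, by omega, by omega, by omega, by omega,
        .inr (.inl ⟨by omega, hvu, hu.resolve_left j.succ_ne_zero⟩)⟩
    · rw [hV0, hV (k + 1) (by omega)] at *
      exact ⟨1, k + 1, le_rfl, by omega, by omega, by omega, .inr (.inr (.inl ⟨huv, hv⟩))⟩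
    · rw [hV (j + 1) (by omega), hV (k + 1) (by omega)] at *
      exact ⟨j + 1, k + 1, by omega, by omega, by omega, by omega,
        .inr (.inr (.inr ⟨by omega, huv, hv⟩))⟩
  · rintro ⟨j, k, hj1, hj, hk1, hk, h⟩
    obtain ⟨k, rfl⟩ := Nat.exists_eq_add_of_lt hk1
    rw [Nat.zero_add] at *
    have hk' : k < (rowWord lam T (i + 1)).length := by
      rw [rowWord_length, Nat.add_sub_cancel]; omega
    rcases h with h | ⟨hjk, h1, h2⟩ | ⟨h1, h2⟩ | ⟨hjk, h1, h2⟩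
    · exact ⟨0, k, k.zero_le, hk', .inl ⟨by rwa [hV0, hU k (by omega)], .inl rfl⟩⟩
    · refine ⟨j, k, by omega, hk', .inl ⟨?_, .inr ?_⟩⟩
      · rwa [hV j (by omega), hU k (by omega)]
      · rwa [hU k (by omega), hU (j - 1) (by omega), Nat.sub_add_cancel hj1]
    · refine ⟨0, k, k.zero_le, hk', .inr ⟨?_, ?_⟩⟩
      · rwa [hV0, hU k (by omega)]
      · rwa [hV0, hV (k + 1) (by omega)]
    · refine ⟨j, k, by omega, hk', .inr ⟨?_, ?_⟩⟩
      · rwa [hV j (by omega), hU k (by omega)]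
      · rwa [hV j (by omega), hV (k + 1) (by omega)]

end RowWord

theorem stmt0_general (lam : List ℕ) (hlam : IsStrictPartition lam) (T : ℕ × ℕ → ℕ)
    (hrows : ∀ i, 1 ≤ i → i ≤ lam.length → IsHookWord (rowWord lam T i)) :
    IsDecompTab lam T ↔
      ¬ ∃ i j k : ℕ, 1 ≤ i ∧ i + 1 ≤ lam.length ∧
        1 ≤ j ∧ j ≤ lam.getD i 0 ∧ 1 ≤ k ∧ k ≤ lam.getD i 0 ∧
        ((T (i, i) ≤ T (i + 1, i + k)) ∨
         (j < k ∧ T (i, i + j) ≤ T (i + 1, i + k) ∧ T (i + 1, i + k) ≤ T (i + 1, i + j)) ∨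
         (T (i + 1, i + k) < T (i, i) ∧ T (i, i) < T (i, i + k)) ∨
         (j < k ∧ T (i + 1, i + k) < T (i, i + j) ∧ T (i, i + j) < T (i, i + k))) := by
  have hrow : ∀ i, 1 ≤ i → i + 1 ≤ lam.length →
      (IsMaxHookSubwordIn (rowWord lam T i) (rowWord lam T (i + 1) ++ rowWord lam T i) ↔
        ¬ ∃ j k, ExtendsHook (rowWord lam T (i + 1)) (rowWord lam T i) j k) :=
    fun i hi hil => isMaxHookSubwordIn_append_iff (hrows (i + 1) (by omega) hil)
      (hrows i hi (by omega)) (by simpa using hlam.getD_lt_getD hi hil)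
  constructor
  · rintro ⟨-, hmax⟩ ⟨i, j, k, hi, hil, hjk⟩
    exact (hrow i hi hil).mp (hmax i hi hil)
      ((exists_extendsHook_rowWord_iff lam T (hlam.getD_lt_getD hi hil)).mpr ⟨j, k, hjk⟩)
  · intro h
    refine ⟨hrows, fun i hi hil => (hrow i hi hil).mpr fun hext => ?_⟩
    obtain ⟨j, k, hjk⟩ :=
      (exists_extendsHook_rowWord_iff lam T (hlam.getD_lt_getD hi hil)).mp hext
    exact h ⟨i, j, k, hi, hil, hjk⟩

/-- Lemma 2.3 of the paper: characterization of decomposition tableaux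
among shifted tableaux whose rows are hook words, via forbidden configurations. -/
theorem stmt0 (lam : List ℕ) (hlam : IsStrictPartition lam) (T : ℕ × ℕ → ℕ)
    (hpos : ∀ i j, InSD lam i j → 0 < T (i, j))
    (hrows : ∀ i, 1 ≤ i → i ≤ lam.length → IsHookWord (rowWord lam T i)) :
    IsDecompTab lam T ↔
      ¬ ∃ i j k : ℕ, 1 ≤ i ∧ i + 1 ≤ lam.length ∧
        1 ≤ j ∧ j ≤ lam.getD i 0 ∧ 1 ≤ k ∧ k ≤ lam.getD i 0 ∧
        ((T (i, i) ≤ T (i + 1, i + k)) ∨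
         (j < k ∧ T (i, i + j) ≤ T (i + 1, i + k) ∧ T (i + 1, i + k) ≤ T (i + 1, i + j)) ∨
         (T (i + 1, i + k) < T (i, i) ∧ T (i, i) < T (i, i + k)) ∨
         (j < k ∧ T (i + 1, i + k) < T (i, i + j) ∧ T (i, i + j) < T (i, i + k))) :=
  stmt0_general lam hlam T hrows
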